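/- Let X and Y be first-countable Tychonoff (completely regular Hausdorff) spaces and let E and F be nontrivial real normed vector spaces. If there exists a biseparating map T : C*(X,E) → C*(Y,F), then X and Y are homeomorphic. -/

import Mathlib

/-!
For `y : Y`, the closures in `βX` of the cozero sets of all `f` with `(T f) y ≠ 0` have a common
point `h y`: otherwise finitely many of them have empty intersection, and cutting one such `f` by a
partition of unity subordinate to their complements, additivity and separation give a
contradiction. The support map `h : Y → βX` is continuous with dense range, and the extension
`k : βX → βY` of the support map of `T⁻¹` satisfies `k ∘ h = ι_Y`. Hence `h y` is the only point of
`βX` over `ι_Y y`, and `ι_Y y` is a Gδ point of `βY` when `Y` is first countable, so `h y` is a Gδ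
point of `βX`. A Gδ point of `βX` lies in `X`: otherwise a bounded function on `X` oscillating
along a sequence converging to it would have no continuous extension to `βX`. So `h` and its
counterpart for `T⁻¹` are mutually inverse continuous maps between `Y` and `X`.
-/

open scoped BoundedContinuousFunction
open Set Filter Topology

section GeneralTopology

variable {X Y K L : Type*} [TopologicalSpace X] [TopologicalSpace Y] [TopologicalSpace K]
  [TopologicalSpace L]

theorem exists_tsupport_subset_eventuallyEq_one [CompactSpace K] [T2Space K] {z : K} {V : Set K}
    (hV : IsOpen V) (hz : z ∈ V) : ∃ u : C(K, ℝ), tsupport u ⊆ V ∧ u =ᶠ[𝓝 z] 1 := by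
  obtain ⟨t, htz, htc, htV⟩ := exists_mem_nhds_isClosed_subset (hV.mem_nhds hz)
  obtain ⟨u, huV, hu1, -⟩ :=
    exists_tsupport_one_of_isOpen_isClosed hV isClosed_closure.isCompact htc htV
  exact ⟨u, huV, eventually_of_mem htz hu1⟩

theorem tendsto_nhds_of_preimage_singleton_eq [CompactSpace K] [T2Space L] {f : K → L}
    (hf : Continuous f) {c : L} {z : K} (hz : f ⁻¹' {c} = {z}) {ι : Type*} {l : Filter ι}
    {w : ι → K} (h : Tendsto (f ∘ w) l (𝓝 c)) : Tendsto w l (𝓝 z) :=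
  tendsto_nhds_of_unique_mapClusterPt fun x hx => by
    have hfx : x ∈ f ⁻¹' {c} :=
      eq_of_nhds_neBot ((hx.continuousAt_comp hf.continuousAt).clusterPt.mono h).neBot
    rwa [hz] at hfx

theorem tendsto_two_mul_add_atTop (i : ℕ) : Tendsto (fun k : ℕ => 2 * k + i) atTop atTop :=
  StrictMono.tendsto_atTop fun _ _ h => by omega

theorem exists_continuousOn_alternating {u : ℕ → ℝ} {a : ℝ} (hinj : Function.Injective u)
    (hlt : ∀ n, u n < a) (hlim : Tendsto u atTop (𝓝 a)) :
    ∃ w : ℝ → ℝ, ContinuousOn w (Iio a) ∧ ∀ k, w (u (2 * k)) = 0 ∧ w (u (2 * k + 1)) = 1 := by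
  let S : ℕ → Set (Iio a) := fun i => Subtype.val ⁻¹' insert a (range fun k => u (2 * k + i))
  have hS : ∀ i, IsClosed (S i) := fun i =>
    ((hlim.comp (tendsto_two_mul_add_atTop i)).isCompact_insert_range.isClosed).preimage
      continuous_subtype_val
  have hdisj : Disjoint (S 0) (S 1) := by
    rw [Set.disjoint_left]
    rintro ⟨t, ht : t < a⟩ h0 h1
    obtain ⟨k, hk⟩ := (mem_insert_iff.1 h0).resolve_left ht.ne
    obtain ⟨m, hm⟩ := (mem_insert_iff.1 h1).resolve_left ht.ne
    have := hinj (hk.trans hm.symm)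
    omega
  obtain ⟨w, hw0, hw1, -⟩ := exists_continuous_zero_one_of_isClosed (hS 0) (hS 1) hdisj
  refine ⟨fun t => if h : t < a then w ⟨t, h⟩ else 0, ?_, fun k => ⟨?_, ?_⟩⟩
  · rw [continuousOn_iff_continuous_domRestrict]
    convert w.continuous
    ext t
    simp [t.2.out]
  · simpa [hlt] using hw0 (x := ⟨u (2 * k), hlt _⟩) (mem_insert_of_mem _ ⟨k, rfl⟩)
  · simpa [hlt] using hw1 (x := ⟨u (2 * k + 1), hlt _⟩) (mem_insert_of_mem _ ⟨k, rfl⟩)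

theorem mem_range_of_isGδ_singleton [CompactSpace K] [T2Space K] {j : X → K} (hj : Continuous j)
    (hd : DenseRange j)
    (hext : ∀ g : X → unitInterval, Continuous g → ∃ G : K → unitInterval, Continuous G ∧ G ∘ j = g)
    {z : K} (hz : IsGδ {z}) : z ∈ range j := by
  by_contra hzj
  obtain ⟨f, hfz, -, -, hf01⟩ := exists_continuous_one_zero_of_isCompact_of_isGδ
    isCompact_singleton hz isClosed_empty (disjoint_empty _)
  have hfz' : f z = 1 := (hfz.subset rfl : _)
  have hlt : ∀ x, f (j x) < 1 := fun x =>
    (hf01 _).2.lt_of_ne fun h => hzj ⟨x, (hfz.superset h : j x ∈ ({z} : Set K))⟩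
  have hlub : IsLUB (range (f ∘ j)) 1 := by
    refine isLUB_of_mem_closure (forall_mem_range.2 fun x => (hlt x).le) ?_
    rw [range_comp, ← hfz']
    exact mem_closure_image f.continuous.continuousAt (hd.closure_eq.symm ▸ mem_univ z)
  have : Nonempty X := hd.nonempty_iff.2 ⟨z⟩
  obtain ⟨u, hu, hu1, hlim, hur⟩ := hlub.exists_seq_strictMono_tendsto_of_notMem
    (fun ⟨x, hx⟩ => (hlt x).ne hx) (range_nonempty _)
  choose x hx using hur
  have hxz : Tendsto (j ∘ x) atTop (𝓝 z) :=
    tendsto_nhds_of_preimage_singleton_eq f.continuous hfz.symm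
      (by rwa [show f ∘ (j ∘ x) = u from funext hx])
  obtain ⟨w, hw, hw01⟩ := exists_continuousOn_alternating hu.injective hu1 hlim
  obtain ⟨G, hG, hGj⟩ := hext (fun x => projIcc 0 1 zero_le_one (w (f (j x))))
    (continuous_projIcc.comp (hw.comp_continuous (f.continuous.comp hj) hlt))
  have hGx : ∀ n, G (j (x n)) = projIcc 0 1 zero_le_one (w (u n)) := fun n => by
    rw [← hx n]; exact congrFun hGj (x n)
  have hGz : ∀ i, Tendsto (fun k => G (j (x (2 * k + i)))) atTop (𝓝 (G z)) := fun i =>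
    ((hG.tendsto z).comp hxz).comp (tendsto_two_mul_add_atTop i)
  have h0 : G z = 0 := tendsto_nhds_unique (hGz 0) (by simp [hGx, (hw01 _).1])
  have h1 : G z = 1 := tendsto_nhds_unique (hGz 1) (by simp [hGx, (hw01 _).2])
  exact zero_ne_one (h0.symm.trans h1)

theorem Topology.IsDenseInducing.isGδ_singleton [T2Space L] {ι : Y → L} (hι : IsDenseInducing ι)
    (y : Y) [(𝓝 y).IsCountablyGenerated] : IsGδ {ι y} := by
  obtain ⟨B, hB⟩ := (𝓝 y).exists_antitone_basis
  have hV : ∀ n, ∃ V, (ι y ∈ V ∧ IsOpen V) ∧ ι ⁻¹' V ⊆ B n := fun n =>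
    ((nhds_basis_opens (ι y)).comap ι).mem_iff.1 (hι.nhds_eq_comap y ▸ hB.mem n)
  choose V hV hVB using hV
  suffices ⋂ n, V n = {ι y} from this ▸ IsGδ.iInter_of_isOpen fun n => (hV n).2
  refine Subset.antisymm (fun z hz => ?_) (singleton_subset_iff.2 (mem_iInter.2 fun n => (hV n).1))
  by_contra hzy
  obtain ⟨P, Q, hP, hQ, hzP, hyQ, hPQ⟩ := t2_separation hzy
  obtain ⟨n, hn⟩ := hB.mem_iff.1 (hι.continuous.continuousAt.preimage_mem_nhds (hQ.mem_nhds hyQ))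
  obtain ⟨_, ⟨hy'V, hy'P⟩, y', rfl⟩ :=
    hι.dense.inter_open_nonempty _ ((hV n).2.inter hP) ⟨z, mem_iInter.1 hz n, hzP⟩
  exact hPQ.le_bot ⟨hy'P, hn (hVB n hy'V)⟩

theorem preimage_singleton_eq_of_comp_eq [T2Space K] {s : Y → K} {k : K → L} {ι : Y → L}
    (hs : Continuous s) (hsd : DenseRange s) (hk : Continuous k) (hι : IsInducing ι)
    (hks : k ∘ s = ι) (y : Y) : k ⁻¹' {ι y} = {s y} := by
  refine Subset.antisymm (fun z hz => ?_) (singleton_subset_iff.2 (congrFun hks y))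
  by_contra hzy
  obtain ⟨P, Q, hP, hQ, hzP, hyQ, hPQ⟩ := t2_separation hzy
  obtain ⟨V, ⟨hyV, hV⟩, hVQ⟩ := ((nhds_basis_opens (ι y)).comap ι).mem_iff.1
    (hι.nhds_eq_comap y ▸ hs.continuousAt.preimage_mem_nhds (hQ.mem_nhds hyQ))
  obtain ⟨_, ⟨hy'V, hy'P⟩, y', rfl⟩ :=
    hsd.inter_open_nonempty _ ((hV.preimage hk).inter hP)
      ⟨z, show k z ∈ V from (mem_singleton_iff.1 hz).symm ▸ hyV, hzP⟩
  refine hPQ.le_bot ⟨hy'P, hVQ ?_⟩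
  simpa [← hks] using hy'V

end GeneralTopology

namespace StoneCech

variable {X : Type*} [TopologicalSpace X]

def compUnit (u : C(StoneCech X, ℝ)) : X →ᵇ ℝ :=
  (BoundedContinuousFunction.mkOfCompact u).compContinuous ⟨stoneCechUnit, continuous_stoneCechUnit⟩

variable {E : Type*} [NormedAddCommGroup E]

def support (f : X →ᵇ E) : Set (StoneCech X) := closure (stoneCechUnit '' Function.support f)

theorem stoneCechUnit_mem_support {f : X →ᵇ E} {x : X} (hx : f x ≠ 0) :
    stoneCechUnit x ∈ support f :=
  subset_closure ⟨x, hx, rfl⟩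

variable [NormedSpace ℝ E]

@[simp]
theorem compUnit_smul_apply (u : C(StoneCech X, ℝ)) (f : X →ᵇ E) (x : X) :
    (compUnit u • f) x = u (stoneCechUnit x) • f x := rfl

theorem support_compUnit_smul_subset (u : C(StoneCech X, ℝ)) (f : X →ᵇ E) :
    support (compUnit u • f) ⊆ tsupport u :=
  closure_mono <| image_subset_iff.2 fun _ hx => left_ne_zero_of_smul hx

theorem compUnit_smul_apply_eq_zero {u : C(StoneCech X, ℝ)} {x : X}
    (hx : stoneCechUnit x ∉ tsupport u) (f : X →ᵇ E) : (compUnit u • f) x = 0 := by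
  simp [image_eq_zero_of_notMem_tsupport hx]

theorem mem_range_stoneCechUnit_of_isGδ {z : StoneCech X} (hz : IsGδ {z}) :
    z ∈ range (stoneCechUnit : X → StoneCech X) :=
  mem_range_of_isGδ_singleton continuous_stoneCechUnit denseRange_stoneCechUnit
    (fun _ hg => ⟨_, continuous_stoneCechExtend hg, stoneCechExtend_extends hg⟩) hz

end StoneCech

section Separating

variable {X Y E F : Type*} [TopologicalSpace X] [TopologicalSpace Y]
  [NormedAddCommGroup E] [NormedAddCommGroup F]

def IsSeparating (S : (X →ᵇ E) → (Y →ᵇ F)) : Prop :=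
  ∀ f g : X →ᵇ E, (∀ x, f x = 0 ∨ g x = 0) → ∀ y, S f y = 0 ∨ S g y = 0

theorem Function.Surjective.exists_apply_ne_zero [Nontrivial F] {T : (X →ᵇ E) → (Y →ᵇ F)}
    (hT : Function.Surjective T) (y : Y) : ∃ f, T f y ≠ 0 :=
  let ⟨e, he⟩ := exists_ne (0 : F)
  let ⟨f, hf⟩ := hT (BoundedContinuousFunction.const Y e)
  ⟨f, by simpa [hf] using he⟩

open StoneCech

variable [NormedSpace ℝ E]

theorem IsSeparating.nonempty_iInter_support {𝒯 : Type*} [FunLike 𝒯 (X →ᵇ E) (Y →ᵇ F)]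
    [AddMonoidHomClass 𝒯 (X →ᵇ E) (Y →ᵇ F)] {T : 𝒯} (hT : IsSeparating T) {y : Y}
    (hy : ∃ f : X →ᵇ E, T f y ≠ 0) :
    (⋂ f ∈ {f : X →ᵇ E | T f y ≠ 0}, support f).Nonempty := by
  obtain ⟨f₀, hf₀⟩ := hy
  by_contra hempty
  have hcover : (univ : Set (StoneCech X)) ⊆ ⋃ f : {f : X →ᵇ E // T f y ≠ 0}, (support f.1)ᶜ := by
    intro z _
    by_contra hz
    simp only [mem_iUnion, mem_compl_iff, not_exists, not_not] at hz
    exact hempty ⟨z, mem_iInter₂.2 fun f hf => hz ⟨f, hf⟩⟩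
  obtain ⟨t, ht⟩ := isCompact_univ.elim_finite_subcover _
    (fun _ => isClosed_closure.isOpen_compl) hcover
  obtain ⟨ρ, hρ⟩ := PartitionOfUnity.exists_isSubordinate isClosed_univ
    (fun i : t => (support i.1.1)ᶜ) (fun _ => isClosed_closure.isOpen_compl) fun z hz => by
      obtain ⟨i, hi, hzi⟩ := mem_iUnion₂.1 (ht hz)
      exact mem_iUnion.2 ⟨⟨i, hi⟩, hzi⟩
  have hsum : ∑ i : t, compUnit (ρ i) • f₀ = f₀ := by
    ext x
    have hone : ∑ i : t, ρ i (stoneCechUnit x) = 1 := by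
      rw [← finsum_eq_sum_of_fintype]
      exact ρ.sum_eq_one (mem_univ _)
    simp only [BoundedContinuousFunction.sum_apply, compUnit_smul_apply, ← Finset.sum_smul, hone,
      one_smul]
  obtain ⟨i, -, hi⟩ : ∃ i ∈ Finset.univ, T (compUnit (ρ i) • f₀) y ≠ 0 := by
    refine Finset.exists_ne_zero_of_sum_ne_zero ?_
    rwa [← BoundedContinuousFunction.sum_apply, ← map_sum, hsum]
  have hdisj : ∀ x, (compUnit (ρ i) • f₀) x = 0 ∨ i.1.1 x = 0 := fun x =>
    or_iff_not_imp_right.2 fun hx =>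
      compUnit_smul_apply_eq_zero (fun h => hρ i h (stoneCechUnit_mem_support hx)) f₀
  exact (hT _ _ hdisj y).elim hi i.1.2

namespace IsSeparating

variable [Nontrivial F] {T : (X →ᵇ E) ≃+ (Y →ᵇ F)} (hT : IsSeparating T)
include hT

noncomputable def supportPoint (y : Y) : StoneCech X :=
  (hT.nonempty_iInter_support (T.surjective.exists_apply_ne_zero y)).some

theorem supportPoint_mem_support {f : X →ᵇ E} {y : Y} (hf : T f y ≠ 0) :
    hT.supportPoint y ∈ support f :=
  mem_iInter₂.1 (Nonempty.some_mem _) f hf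

theorem apply_compUnit_smul_eq_zero {u : C(StoneCech X, ℝ)} {y : Y}
    (hy : hT.supportPoint y ∉ tsupport u) (f : X →ᵇ E) : T (compUnit u • f) y = 0 :=
  not_not.1 fun h => hy (support_compUnit_smul_subset u f (hT.supportPoint_mem_support h))

theorem exists_apply_ne_zero_support_subset {y : Y} {V : Set (StoneCech X)} (hV : IsOpen V)
    (hyV : hT.supportPoint y ∈ V) : ∃ f : X →ᵇ E, T f y ≠ 0 ∧ support f ⊆ V := by
  obtain ⟨u, huV, hu1⟩ := exists_tsupport_subset_eventuallyEq_one hV hyV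
  obtain ⟨g, hg⟩ := T.surjective.exists_apply_ne_zero y
  have hsplit : g = compUnit (1 - u) • g + compUnit u • g := by
    ext x
    simp [sub_smul]
  have h1u : hT.supportPoint y ∉ tsupport (1 - u : C(StoneCech X, ℝ)) :=
    notMem_tsupport_iff_eventuallyEq.2 (hu1.mono fun z hz => by simp [hz])
  refine ⟨compUnit u • g, fun h => hg ?_, (support_compUnit_smul_subset u g).trans huV⟩
  rw [hsplit, map_add, BoundedContinuousFunction.add_apply, hT.apply_compUnit_smul_eq_zero h1u, h,
    add_zero]

theorem continuous_supportPoint : Continuous hT.supportPoint := by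
  refine continuous_iff_continuousAt.2 fun y => (nhds_basis_opens _).tendsto_right_iff.2 ?_
  rintro V ⟨hyV, hV⟩
  obtain ⟨f, hf, hfV⟩ := hT.exists_apply_ne_zero_support_subset hV hyV
  filter_upwards [(T f).continuous.continuousAt.eventually_ne hf] with y' hy'
  exact hfV (hT.supportPoint_mem_support hy')

theorem denseRange_supportPoint [Nontrivial E] : DenseRange hT.supportPoint := by
  refine dense_iff_inter_open.2 fun U hU hUne => ?_
  obtain ⟨x, hx⟩ := denseRange_stoneCechUnit.exists_mem_open hU hUne
  obtain ⟨u, huU, hu1⟩ := exists_tsupport_subset_eventuallyEq_one hU hx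
  obtain ⟨e, he⟩ := exists_ne (0 : E)
  set f := compUnit u • BoundedContinuousFunction.const X e
  have hf : f ≠ 0 := fun h => he <| by
    simpa [f, hu1.eq_of_nhds] using DFunLike.congr_fun h x
  obtain ⟨y, hy⟩ := DFunLike.ne_iff.1 ((map_ne_zero_iff T T.injective).2 hf)
  exact ⟨hT.supportPoint y, huU (support_compUnit_smul_subset u _
    (hT.supportPoint_mem_support hy)), y, rfl⟩

variable [NormedSpace ℝ F] [Nontrivial E] (hT' : IsSeparating T.symm)
include hT'

theorem stoneCechExtend_supportPoint (y : Y) :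
    stoneCechExtend hT'.continuous_supportPoint (hT.supportPoint y) = stoneCechUnit y := by
  set k := stoneCechExtend hT'.continuous_supportPoint
  by_contra hne
  obtain ⟨u, hu, hu1⟩ := exists_tsupport_subset_eventuallyEq_one isOpen_compl_singleton
    (Ne.symm hne)
  have hW : k (hT.supportPoint y) ∉ tsupport u := fun h => hu h rfl
  obtain ⟨f, hf, hfW⟩ := hT.exists_apply_ne_zero_support_subset
    ((isClosed_tsupport u).isOpen_compl.preimage (continuous_stoneCechExtend _)) hW
  -- `T⁻¹ (u • T f)` and `f` have disjoint cozero sets, while `u • T f` agrees with `T f` at `y`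
  have hdisj : ∀ x, T.symm (compUnit u • T f) x = 0 ∨ f x = 0 := fun x =>
    or_iff_not_imp_right.2 fun hx => hT'.apply_compUnit_smul_eq_zero
      (by simpa [k] using hfW (stoneCechUnit_mem_support hx)) _
  refine (hT _ _ hdisj y).elim (fun h => hf ?_) hf
  simpa [hu1.eq_of_nhds] using h

theorem supportPoint_mem_range [CompletelyRegularSpace Y] [FirstCountableTopology Y] (y : Y) :
    hT.supportPoint y ∈ range (stoneCechUnit : X → StoneCech X) := by
  refine mem_range_stoneCechUnit_of_isGδ ?_
  rw [← preimage_singleton_eq_of_comp_eq hT.continuous_supportPoint hT.denseRange_supportPoint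
    (continuous_stoneCechExtend _) isInducing_stoneCechUnit
    (funext (hT.stoneCechExtend_supportPoint hT')) y]
  exact (isDenseInducing_stoneCechUnit.isGδ_singleton y).preimage (continuous_stoneCechExtend _)

theorem nonempty_homeomorph [T35Space X] [T35Space Y] [FirstCountableTopology X]
    [FirstCountableTopology Y] : Nonempty (X ≃ₜ Y) := by
  choose φ hφ using hT.supportPoint_mem_range hT'
  choose ψ hψ using hT'.supportPoint_mem_range hT
  have hψφ : ∀ y, ψ (φ y) = y := fun y => injective_stoneCechUnit_of_t35Space <| by
    rw [hψ, ← stoneCechExtend_stoneCechUnit hT'.continuous_supportPoint, hφ,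
      hT.stoneCechExtend_supportPoint hT']
  have hφψ : ∀ x, φ (ψ x) = x := fun x => injective_stoneCechUnit_of_t35Space <| by
    rw [hφ, ← stoneCechExtend_stoneCechUnit hT.continuous_supportPoint, hψ]
    exact hT'.stoneCechExtend_supportPoint hT x
  have hφc : Continuous φ := isEmbedding_stoneCechUnit.continuous_iff.2 <| by
    simpa [Function.comp_def, hφ] using hT.continuous_supportPoint
  have hψc : Continuous ψ := isEmbedding_stoneCechUnit.continuous_iff.2 <| by
    simpa [Function.comp_def, hψ] using hT'.continuous_supportPoint
  exact ⟨⟨⟨ψ, φ, hφψ, hψφ⟩, hψc, hφc⟩⟩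

end IsSeparating

end Separating

/-- If `X`, `Y` are first-countable Tychonoff spaces, `E`, `F` nontrivial real
normed spaces, and there exists a biseparating map `T : C*(X,E) → C*(Y,F)`, then `X` and `Y`
are homeomorphic. -/
theorem stmt_2 {X Y E F : Type*}
    [TopologicalSpace X] [T35Space X] [FirstCountableTopology X]
    [TopologicalSpace Y] [T35Space Y] [FirstCountableTopology Y]
    [NormedAddCommGroup E] [NormedSpace ℝ E] [Nontrivial E]
    [NormedAddCommGroup F] [NormedSpace ℝ F] [Nontrivial F]
    (T : (X →ᵇ E) → (Y →ᵇ F))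
    (hbij : Function.Bijective T)
    (hadd : ∀ f g : X →ᵇ E, T (f + g) = T f + T g)
    (hsep : ∀ f g : X →ᵇ E, (∀ x, ‖f x‖ * ‖g x‖ = 0) → ∀ y, ‖T f y‖ * ‖T g y‖ = 0)
    (hsep' : ∀ f g : X →ᵇ E, (∀ y, ‖T f y‖ * ‖T g y‖ = 0) → ∀ x, ‖f x‖ * ‖g x‖ = 0) :
    Nonempty (X ≃ₜ Y) := by
  let T' : (X →ᵇ E) ≃+ (Y →ᵇ F) := AddEquiv.ofBijective (AddMonoidHom.mk' T hadd) hbij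
  have hT : IsSeparating T' := fun f g h y => by
    show T f y = 0 ∨ T g y = 0
    simpa using hsep f g (fun x => by simpa using h x) y
  have hT' : IsSeparating T'.symm := fun f g h x => by
    have hf : T (T'.symm f) = f := T'.apply_symm_apply f
    have hg : T (T'.symm g) = g := T'.apply_symm_apply g
    simpa using hsep' _ _ (fun y => by simpa [hf, hg] using h y) x
  exact hT.nonempty_homeomorph hT'
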